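/- Let H₁ and H₂ be labelled balanced bipartite graphs, let t₁ and t₂ be even positive integers, and let X₁ ⊆ A₁ and X₂ ⊆ A₂. Suppose that between every two vertices of X₁ there is a walk with exactly t₁ edges in H₁, and between every two vertices of X₂ there is a walk with exactly t₂ edges in H₂. Then between every two vertices of X₁ × X₂ ⊆ A₁ × A₂ there is a walk with exactly t₁ + t₂ edges in H₁ ⋈ H₂ (in particular, any two distinct such vertices are joined by a path with at most t₁ + t₂ edges). -/

import Mathlib

/-- A graph on a sum type is (balanced) bipartite with the two summands as parts:
every edge joins a left vertex to a right vertex. -/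
def IsBipSum {α β : Type*} (H : SimpleGraph (α ⊕ β)) : Prop :=
  (∀ i j, ¬ H.Adj (Sum.inl i) (Sum.inl j)) ∧ (∀ i j, ¬ H.Adj (Sum.inr i) (Sum.inr j))

/-- The labelling of a labelled balanced bipartite graph is a matching ordering:
`a_i b_i` is an edge for every `i`. -/
def MatchingOrd {n : ℕ} (H : SimpleGraph (Fin n ⊕ Fin n)) : Prop :=
  ∀ i : Fin n, H.Adj (Sum.inl i) (Sum.inr i)

/-- The labelling of a labelled balanced bipartite graph is a comatching ordering:
`a_i b_i` is not an edge for any `i`. -/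
def ComatchingOrd {n : ℕ} (H : SimpleGraph (Fin n ⊕ Fin n)) : Prop :=
  ∀ i : Fin n, ¬ H.Adj (Sum.inl i) (Sum.inr i)

/-- The balanced bipartite product `H₁ ⋈ H₂` of two labelled balanced bipartite graphs:
the vertex set is `(A₁ × A₂) ⊕ (B₁ × B₂)`, with `(a¹_i, a²_j)` adjacent to `(b¹_k, b²_l)`
iff `i = k` and `a²_j b²_l ∈ E₂`, or `j = l` and `a¹_i b¹_k ∈ E₁`. -/
def bbProd {n₁ n₂ : ℕ} (H₁ : SimpleGraph (Fin n₁ ⊕ Fin n₁))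
    (H₂ : SimpleGraph (Fin n₂ ⊕ Fin n₂)) :
    SimpleGraph ((Fin n₁ × Fin n₂) ⊕ (Fin n₁ × Fin n₂)) where
  Adj x y :=
    match x, y with
    | Sum.inl (i, j), Sum.inr (k, l) =>
        (i = k ∧ H₂.Adj (Sum.inl j) (Sum.inr l)) ∨ (j = l ∧ H₁.Adj (Sum.inl i) (Sum.inr k))
    | Sum.inr (k, l), Sum.inl (i, j) =>
        (i = k ∧ H₂.Adj (Sum.inl j) (Sum.inr l)) ∨ (j = l ∧ H₁.Adj (Sum.inl i) (Sum.inr k))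
    | _, _ => False
  symm := by
    exact ⟨by rintro (⟨i, j⟩ | ⟨i, j⟩) (⟨k, l⟩ | ⟨k, l⟩) h <;> exact h⟩
  loopless := by
    exact ⟨by rintro (⟨i, j⟩ | ⟨i, j⟩) h <;> exact h⟩

/-! Each fibre of `H₁ ⋈ H₂` over a fixed second (first) coordinate is a copy of `H₁` (`H₂`).
So a walk from `(i, j)` to `(i', j')` is obtained by following a walk from `i` to `i'` in the
fibre over `j`, then a walk from `j` to `j'` in the fibre over `i'`. -/

namespace bbProd

open SimpleGraph

variable {n₁ n₂ : ℕ} (H₁ : SimpleGraph (Fin n₁ ⊕ Fin n₁)) (H₂ : SimpleGraph (Fin n₂ ⊕ Fin n₂))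

def homLeft (hb₁ : IsBipSum H₁) (j : Fin n₂) : H₁ →g bbProd H₁ H₂ where
  toFun := Sum.elim (fun k => Sum.inl (k, j)) (fun k => Sum.inr (k, j))
  map_rel' := by
    rintro (k | k) (k' | k') h
    · exact absurd h (hb₁.1 k k')
    · exact Or.inr ⟨rfl, h⟩
    · exact Or.inr ⟨rfl, h.symm⟩
    · exact absurd h (hb₁.2 k k')

def homRight (hb₂ : IsBipSum H₂) (i : Fin n₁) : H₂ →g bbProd H₁ H₂ where
  toFun := Sum.elim (fun l => Sum.inl (i, l)) (fun l => Sum.inr (i, l))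
  map_rel' := by
    rintro (l | l) (l' | l') h
    · exact absurd h (hb₂.1 l l')
    · exact Or.inl ⟨rfl, h⟩
    · exact Or.inl ⟨rfl, h.symm⟩
    · exact absurd h (hb₂.2 l l')

variable {H₁ H₂}

theorem exists_walk_length_add (hb₁ : IsBipSum H₁) (hb₂ : IsBipSum H₂) {i i' : Fin n₁}
    {j j' : Fin n₂} (p₁ : H₁.Walk (Sum.inl i) (Sum.inl i'))
    (p₂ : H₂.Walk (Sum.inl j) (Sum.inl j')) :
    ∃ q : (bbProd H₁ H₂).Walk (Sum.inl (i, j)) (Sum.inl (i', j')),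
      q.length = p₁.length + p₂.length :=
  ⟨(p₁.map (homLeft H₁ H₂ hb₁ j)).append (p₂.map (homRight H₁ H₂ hb₂ i')),
    (Walk.length_append _ _).trans
      (congrArg₂ (· + ·) (Walk.length_map _ _) (Walk.length_map _ _))⟩

end bbProd

theorem bbProd_walk_even_even_general {n₁ n₂ : ℕ}
    (H₁ : SimpleGraph (Fin n₁ ⊕ Fin n₁)) (H₂ : SimpleGraph (Fin n₂ ⊕ Fin n₂))
    (hb₁ : IsBipSum H₁) (hb₂ : IsBipSum H₂)
    (t₁ t₂ : ℕ)
    (X₁ : Set (Fin n₁)) (X₂ : Set (Fin n₂))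
    (h₁ : ∀ i ∈ X₁, ∀ i' ∈ X₁,
      ∃ p : H₁.Walk (Sum.inl i) (Sum.inl i'), p.length = t₁)
    (h₂ : ∀ j ∈ X₂, ∀ j' ∈ X₂,
      ∃ p : H₂.Walk (Sum.inl j) (Sum.inl j'), p.length = t₂) :
    ∀ i ∈ X₁, ∀ j ∈ X₂, ∀ i' ∈ X₁, ∀ j' ∈ X₂,
      ∃ q : (bbProd H₁ H₂).Walk (Sum.inl (i, j)) (Sum.inl (i', j')),
        q.length = t₁ + t₂ := by
  intro i hi j hj i' hi' j' hj'
  obtain ⟨p₁, rfl⟩ := h₁ i hi i' hi'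
  obtain ⟨p₂, rfl⟩ := h₂ j hj j' hj'
  exact bbProd.exists_walk_length_add hb₁ hb₂ p₁ p₂

/-- Proposition 8(1): if every two vertices of `X₁ ⊆ A₁` are joined by a walk with
exactly `t₁` edges (`t₁` even) and every two vertices of `X₂ ⊆ A₂` are joined by a walk
with exactly `t₂` edges (`t₂` even), then every two vertices of `X₁ × X₂ ⊆ A₁ × A₂`
are joined by a walk with exactly `t₁ + t₂` edges in `H₁ ⋈ H₂`. -/
theorem bbProd_walk_even_even {n₁ n₂ : ℕ}
    (H₁ : SimpleGraph (Fin n₁ ⊕ Fin n₁)) (H₂ : SimpleGraph (Fin n₂ ⊕ Fin n₂))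
    (hb₁ : IsBipSum H₁) (hb₂ : IsBipSum H₂)
    (t₁ t₂ : ℕ) (ht₁pos : 0 < t₁) (ht₂pos : 0 < t₂) (ht₁ : Even t₁) (ht₂ : Even t₂)
    (X₁ : Set (Fin n₁)) (X₂ : Set (Fin n₂))
    (h₁ : ∀ i ∈ X₁, ∀ i' ∈ X₁,
      ∃ p : H₁.Walk (Sum.inl i) (Sum.inl i'), p.length = t₁)
    (h₂ : ∀ j ∈ X₂, ∀ j' ∈ X₂,
      ∃ p : H₂.Walk (Sum.inl j) (Sum.inl j'), p.length = t₂) :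
    ∀ i ∈ X₁, ∀ j ∈ X₂, ∀ i' ∈ X₁, ∀ j' ∈ X₂,
      ∃ q : (bbProd H₁ H₂).Walk (Sum.inl (i, j)) (Sum.inl (i', j')),
        q.length = t₁ + t₂ :=
  bbProd_walk_even_even_general H₁ H₂ hb₁ hb₂ t₁ t₂ X₁ X₂ h₁ h₂
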